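/- Define q-Fibonacci polynomials by F_0(q) = F_1(q) = 1 and F_n(q) = F_{n-1}(q) + q·F_{n-2}(q). Let a be the reduced word s_k s_{k-1} s_{k+1} s_k ⋯ s_l s_{l-1} (for 2 ≤ k ≤ l) for w_{k,l} ∈ S_n, and let P_e(a) = Σ_{σ: π(w^σ)=e} q^{|D(σ)|} be the defect generating polynomial over masks whose subword product is the identity. Then P_e(a) = F_{l-k+1}(q). -/

import Mathlib

open Polynomial

/-- The simple transposition `s_i = (i, i+1)` (1-based) in `S_n`, acting on `Fin n`
(0-based positions `i-1` and `i`); equals `1` if `i` is out of range. -/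
def gen (n : ℕ) (i : ℕ) : Equiv.Perm (Fin n) :=
  if h : 1 ≤ i ∧ i < n then Equiv.swap ⟨i - 1, by omega⟩ ⟨i, h.2⟩ else 1

/-- Product of the word `l` of generator indices. -/
def wordProd (n : ℕ) (l : List ℕ) : Equiv.Perm (Fin n) :=
  (l.map (gen n)).prod

/-- Coxeter length of `w ∈ S_n`. -/
noncomputable def len (n : ℕ) (w : Equiv.Perm (Fin n)) : ℕ :=
  sInf {r | ∃ l : List ℕ, (∀ i ∈ l, 1 ≤ i ∧ i < n) ∧ wordProd n l = w ∧ l.length = r}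

/-- `l` is a reduced word for `w`. -/
def IsReducedWord (n : ℕ) (w : Equiv.Perm (Fin n)) (l : List ℕ) : Prop :=
  (∀ i ∈ l, 1 ≤ i ∧ i < n) ∧ wordProd n l = w ∧ l.length = len n w

/-- Bruhat-Chevalley order: `x ≤ w` iff every reduced word for `w` contains a
subword whose product is `x`. -/
def Bruhat (n : ℕ) (x w : Equiv.Perm (Fin n)) : Prop :=
  ∀ l, IsReducedWord n w l → ∃ t, t.Sublist l ∧ wordProd n t = x

/-- `w` is 321-avoiding: no `i < j < k` with `w i > w j > w k`. -/
def Avoids321 (n : ℕ) (w : Equiv.Perm (Fin n)) : Prop :=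
  ¬ ∃ i j k : Fin n, i < j ∧ j < k ∧ w j < w i ∧ w k < w j

/-- Product of the subword of `l` selected by the mask `S` (set of selected positions). -/
def maskProd (n : ℕ) (l : List ℕ) (S : Finset ℕ) : Equiv.Perm (Fin n) :=
  wordProd n (((List.range l.length).filter (fun j => decide (j ∈ S))).map (fun j => l.getD j 0))

/-- Position `j` of the word `l` is a defect of the mask `S`. -/
noncomputable def IsDefect (n : ℕ) (l : List ℕ) (S : Finset ℕ) (j : ℕ) : Prop :=
  len n (maskProd n (l.take j) S * gen n (l.getD j 0)) < len n (maskProd n (l.take j) S)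

/-- The defect set `D(σ)` of the mask `S` on the word `l`. -/
noncomputable def defectSet (n : ℕ) (l : List ℕ) (S : Finset ℕ) : Finset ℕ :=
  (Finset.range l.length).filter (fun j =>
    len n (maskProd n (l.take j) S * gen n (l.getD j 0)) < len n (maskProd n (l.take j) S))

/-- Deodhar's defect generating polynomial `P_x(a) = Σ_{σ : π(w^σ) = x} q^{|D(σ)|}`. -/
noncomputable def defPoly (n : ℕ) (l : List ℕ) (x : Equiv.Perm (Fin n)) : Polynomial ℤ :=
  ∑ S ∈ (Finset.range l.length).powerset,
    if maskProd n l S = x then (X : Polynomial ℤ) ^ (defectSet n l S).card else 0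

/-- The word `s_k s_{k-1} s_{k+1} s_k ⋯ s_l s_{l-1}` for `w_{k,l}`. -/
def wklWord (k l : ℕ) : List ℕ :=
  (List.range (l - k + 1)).flatMap (fun m => [k + m, k + m - 1])

/-- q-Fibonacci polynomials: `F_0 = F_1 = 1`, `F_m = F_{m-1} + q F_{m-2}`. -/
noncomputable def qFib : ℕ → Polynomial ℤ
  | 0 => 1
  | 1 => 1
  | (m + 2) => qFib (m + 1) + X * qFib m

/-!
Appending a letter `s_i` to a word `a` and splitting the masks according to whether they select
it gives Deodhar's recursion
`P_x(a s_i) = q^[ℓ(x s_i) < ℓ(x)] P_x(a) + q^[ℓ(x) < ℓ(x s_i)] P_{x s_i}(a)`.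
The length of a permutation is its number of inversions, so `ℓ(x s_i) < ℓ(x)` exactly when
`x(i) < x(i - 1)`. If all letters of `a` lie in `s_1, …, s_l` and `a' = a s_{l+1} s_l`, two
applications of the recursion give `P_e(a') = P_e(a) + q P_{s_l}(a)` and
`P_{s_{l+1}}(a') = P_e(a)`: every other term is `P_y(a)` for some `y` moving the point `l + 1`,
which no subword of `a` does. This is the recursion of the q-Fibonacci polynomials, started from
`P_e = P_{s_k} = 1` for `w_{k,k} = s_k s_{k-1}`.
-/

section

variable {n : ℕ}

@[simp]
lemma gen_mul_gen (i : ℕ) : gen n i * gen n i = 1 := by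
  unfold gen
  split
  · exact Equiv.swap_mul_self _ _
  · simp

@[simp]
lemma mul_gen_mul_gen (w : Equiv.Perm (Fin n)) (i : ℕ) : w * gen n i * gen n i = w := by
  rw [mul_assoc, gen_mul_gen, mul_one]

@[simp]
lemma gen_apply_gen (i : ℕ) (x : Fin n) : gen n i (gen n i x) = x := by
  rw [← Equiv.Perm.mul_apply, gen_mul_gen, Equiv.Perm.one_apply]

lemma gen_val (i : ℕ) (h1 : 1 ≤ i) (h2 : i < n) (x : Fin n) :
    ((gen n i x : Fin n) : ℕ) =
      if (x : ℕ) = i - 1 then i else if (x : ℕ) = i then i - 1 else x := by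
  rw [gen, dif_pos ⟨h1, h2⟩, Equiv.swap_apply_def]
  simp only [Fin.ext_iff]
  split_ifs <;> simp_all

lemma gen_apply_of_lt (i p : ℕ) (hp : p < n) (hip : i < p) :
    gen n i ⟨p, hp⟩ = ⟨p, hp⟩ := by
  unfold gen
  split
  · exact Equiv.swap_apply_of_ne_of_ne (by simp [Fin.ext_iff]; omega)
      (by simp [Fin.ext_iff]; omega)
  · rfl

lemma gen_apply_pred (i : ℕ) (h1 : 1 ≤ i) (h2 : i < n) :
    gen n i ⟨i - 1, by omega⟩ = ⟨i, h2⟩ := by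
  simp [Fin.ext_iff, gen_val i h1 h2]

lemma gen_apply_self (i : ℕ) (h1 : 1 ≤ i) (h2 : i < n) :
    gen n i ⟨i, h2⟩ = ⟨i - 1, by omega⟩ := by
  simp [Fin.ext_iff, gen_val i h1 h2]

lemma gen_apply_self_ne (i : ℕ) (h1 : 1 ≤ i) (h2 : i < n) : gen n i ⟨i, h2⟩ ≠ ⟨i, h2⟩ := by
  rw [gen_apply_self i h1 h2, Ne, Fin.mk.injEq]
  omega

lemma apply_pred_ne (w : Equiv.Perm (Fin n)) (i : ℕ) (h1 : 1 ≤ i) (h2 : i < n) :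
    w ⟨i - 1, by omega⟩ ≠ w ⟨i, h2⟩ :=
  w.injective.ne (by simp [Fin.ext_iff]; omega)

lemma mul_gen_apply_pred (w : Equiv.Perm (Fin n)) (i : ℕ) (h1 : 1 ≤ i) (h2 : i < n) :
    (w * gen n i) ⟨i - 1, by omega⟩ = w ⟨i, h2⟩ := by
  rw [Equiv.Perm.mul_apply, gen_apply_pred i h1 h2]

lemma mul_gen_apply_self (w : Equiv.Perm (Fin n)) (i : ℕ) (h1 : 1 ≤ i) (h2 : i < n) :
    (w * gen n i) ⟨i, h2⟩ = w ⟨i - 1, by omega⟩ := by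
  rw [Equiv.Perm.mul_apply, gen_apply_self i h1 h2]

lemma gen_lt_gen (i : ℕ) (h1 : 1 ≤ i) (h2 : i < n) {u v : Fin n} (huv : u < v)
    (hne : ¬((u : ℕ) = i - 1 ∧ (v : ℕ) = i)) : gen n i u < gen n i v := by
  have hu := gen_val i h1 h2 u
  have hv := gen_val i h1 h2 v
  rw [Fin.lt_def] at huv ⊢
  split_ifs at hu hv <;> omega

lemma gen_symm (i : ℕ) : (gen n i).symm = gen n i :=
  Equiv.ext fun x => Equiv.symm_apply_eq _ |>.2 (gen_apply_gen i x).symm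

def inversions (w : Equiv.Perm (Fin n)) : Finset (Fin n × Fin n) :=
  Finset.univ.filter fun p => p.1 < p.2 ∧ w p.2 < w p.1

lemma mem_inversions (w : Equiv.Perm (Fin n)) (p : Fin n × Fin n) :
    p ∈ inversions w ↔ p.1 < p.2 ∧ w p.2 < w p.1 := by
  rw [inversions, Finset.mem_filter]
  exact and_iff_right (Finset.mem_univ p)

lemma inversions_one : inversions (1 : Equiv.Perm (Fin n)) = ∅ := by
  ext p
  simp only [mem_inversions, Equiv.Perm.one_apply, Finset.notMem_empty, iff_false, not_and,
    not_lt]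
  exact le_of_lt

lemma inversions_mul_gen (w : Equiv.Perm (Fin n)) (i : ℕ) (h1 : 1 ≤ i) (h2 : i < n)
    (hw : w ⟨i - 1, by omega⟩ < w ⟨i, h2⟩) :
    inversions (w * gen n i) = insert (⟨i - 1, by omega⟩, ⟨i, h2⟩)
      ((inversions w).map (Equiv.prodCongr (gen n i) (gen n i)).toEmbedding) := by
  ext ⟨u, v⟩
  simp only [mem_inversions, Finset.mem_insert, Finset.mem_map_equiv, Prod.mk.injEq,
    Equiv.Perm.mul_apply, Equiv.prodCongr_symm, Equiv.prodCongr_apply, Prod.map, gen_symm,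
    Fin.ext_iff]
  constructor
  · rintro ⟨huv, hwuv⟩
    by_cases hpair : (u : ℕ) = i - 1 ∧ (v : ℕ) = i
    · exact Or.inl hpair
    · exact Or.inr ⟨gen_lt_gen i h1 h2 huv hpair, hwuv⟩
  · rintro (⟨hu, hv⟩ | ⟨huv, hwuv⟩)
    · have hu' : u = ⟨i - 1, by omega⟩ := Fin.ext hu
      have hv' : v = ⟨i, h2⟩ := Fin.ext hv
      rw [hu', hv']
      refine ⟨by simp [Fin.lt_def]; omega, ?_⟩
      rwa [← Equiv.Perm.mul_apply, ← Equiv.Perm.mul_apply, mul_gen_apply_pred w i h1 h2,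
        mul_gen_apply_self w i h1 h2]
    · have hpair : ¬(((gen n i u : Fin n) : ℕ) = i - 1 ∧ ((gen n i v : Fin n) : ℕ) = i) := by
        rintro ⟨hu, hv⟩
        have hu' : gen n i u = ⟨i - 1, by omega⟩ := Fin.ext hu
        have hv' : gen n i v = ⟨i, h2⟩ := Fin.ext hv
        rw [hu', hv'] at hwuv
        exact lt_asymm hw hwuv
      exact ⟨by simpa using gen_lt_gen i h1 h2 huv hpair, hwuv⟩

lemma card_inversions_mul_gen_of_lt (w : Equiv.Perm (Fin n)) (i : ℕ) (h1 : 1 ≤ i) (h2 : i < n)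
    (hw : w ⟨i - 1, by omega⟩ < w ⟨i, h2⟩) :
    (inversions (w * gen n i)).card = (inversions w).card + 1 := by
  rw [inversions_mul_gen w i h1 h2 hw, Finset.card_insert_of_notMem, Finset.card_map]
  rw [Finset.mem_map_equiv, mem_inversions]
  simp only [Equiv.prodCongr_symm, Equiv.prodCongr_apply, Prod.map, gen_symm,
    gen_apply_pred i h1 h2, gen_apply_self i h1 h2, Fin.mk_lt_mk]
  omega

lemma card_inversions_mul_gen_of_gt (w : Equiv.Perm (Fin n)) (i : ℕ) (h1 : 1 ≤ i) (h2 : i < n)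
    (hw : w ⟨i, h2⟩ < w ⟨i - 1, by omega⟩) :
    (inversions w).card = (inversions (w * gen n i)).card + 1 := by
  simpa [mul_assoc] using card_inversions_mul_gen_of_lt (w * gen n i) i h1 h2
    (by rwa [mul_gen_apply_pred w i h1 h2, mul_gen_apply_self w i h1 h2])

lemma card_inversions_mul_gen_le (w : Equiv.Perm (Fin n)) (i : ℕ) :
    (inversions (w * gen n i)).card ≤ (inversions w).card + 1 := by
  by_cases hi : 1 ≤ i ∧ i < n
  · obtain ⟨h1, h2⟩ := hi
    rcases (apply_pred_ne w i h1 h2).lt_or_gt with hlt | hgt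
    · rw [card_inversions_mul_gen_of_lt w i h1 h2 hlt]
    · have := card_inversions_mul_gen_of_gt w i h1 h2 hgt
      omega
  · rw [gen, dif_neg hi, mul_one]
    omega

lemma wordProd_append (u v : List ℕ) : wordProd n (u ++ v) = wordProd n u * wordProd n v := by
  simp [wordProd]

lemma wordProd_singleton (i : ℕ) : wordProd n [i] = gen n i := by
  simp [wordProd]

lemma card_inversions_wordProd_le (l : List ℕ) : (inversions (wordProd n l)).card ≤ l.length := by
  induction l using List.reverseRecOn with
  | nil => simp [wordProd, inversions_one]
  | append_singleton t i ih =>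
    rw [wordProd_append, wordProd_singleton, List.length_append, List.length_singleton]
    exact (card_inversions_mul_gen_le _ i).trans (by omega)

lemma exists_descent {w : Equiv.Perm (Fin n)} (hw : w ≠ 1) :
    ∃ i, ∃ (h1 : 1 ≤ i) (h2 : i < n), w ⟨i, h2⟩ < w ⟨i - 1, by omega⟩ := by
  by_contra! hasc
  apply hw
  obtain _ | m := n
  · exact Subsingleton.elim _ _
  have hmono : StrictMono w := Fin.strictMono_iff_lt_succ.2 fun j => by
    have hpred : j.castSucc = ⟨j + 1 - 1, by omega⟩ := Fin.ext (by simp)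
    have hsucc : j.succ = ⟨j + 1, by omega⟩ := Fin.ext (by simp)
    rw [hpred, hsucc]
    exact (hasc (j + 1) (by omega) _).lt_of_ne (apply_pred_ne w (j + 1) (by omega) _)
  have hid : ⇑w = id := (hmono.range_inj strictMono_id).1 (by simp)
  ext x
  simp [hid]

lemma exists_word_length_eq_card_inversions (w : Equiv.Perm (Fin n)) :
    ∃ l : List ℕ, (∀ i ∈ l, 1 ≤ i ∧ i < n) ∧ wordProd n l = w ∧
      l.length = (inversions w).card := by
  induction hN : (inversions w).card using Nat.strong_induction_on generalizing w with
  | _ N ih =>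
    by_cases hw : w = 1
    · subst hw
      exact ⟨[], by simp, rfl, by simp [← hN, inversions_one]⟩
    obtain ⟨i, h1, h2, hdesc⟩ := exists_descent hw
    have hcard := card_inversions_mul_gen_of_gt w i h1 h2 hdesc
    obtain ⟨l, hl, hprod, hlen⟩ := ih _ (by omega) (w * gen n i) rfl
    refine ⟨l ++ [i], ?_, ?_, ?_⟩
    · exact fun j hj => (List.mem_append.1 hj).elim (hl j)
        fun hj => List.mem_singleton.1 hj ▸ ⟨h1, h2⟩
    · rw [wordProd_append, wordProd_singleton, hprod, mul_gen_mul_gen]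
    · simp only [List.length_append, List.length_singleton]
      omega

lemma len_eq_card_inversions (w : Equiv.Perm (Fin n)) : len n w = (inversions w).card := by
  obtain ⟨l, hl, hprod, hlen⟩ := exists_word_length_eq_card_inversions w
  refine le_antisymm (Nat.sInf_le ⟨l, hl, hprod, hlen⟩) (le_csInf ⟨_, l, hl, hprod, hlen⟩ ?_)
  rintro r ⟨l', -, rfl, rfl⟩
  exact card_inversions_wordProd_le l'

lemma len_mul_gen_of_lt (w : Equiv.Perm (Fin n)) (i : ℕ) (h1 : 1 ≤ i) (h2 : i < n)
    (hw : w ⟨i - 1, by omega⟩ < w ⟨i, h2⟩) : len n (w * gen n i) = len n w + 1 := by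
  rw [len_eq_card_inversions, len_eq_card_inversions, card_inversions_mul_gen_of_lt w i h1 h2 hw]

lemma len_mul_gen_of_gt (w : Equiv.Perm (Fin n)) (i : ℕ) (h1 : 1 ≤ i) (h2 : i < n)
    (hw : w ⟨i, h2⟩ < w ⟨i - 1, by omega⟩) : len n w = len n (w * gen n i) + 1 := by
  rw [len_eq_card_inversions, len_eq_card_inversions, card_inversions_mul_gen_of_gt w i h1 h2 hw]

lemma maskProd_insert_of_length_le (t : List ℕ) (S : Finset ℕ) {N : ℕ} (h : t.length ≤ N) :
    maskProd n t (insert N S) = maskProd n t S := by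
  unfold maskProd
  congr 2
  refine List.filter_congr fun j hj => ?_
  rw [List.mem_range] at hj
  simp only [Finset.mem_insert, decide_eq_decide]
  exact or_iff_right (by omega)

lemma maskProd_append_singleton (t : List ℕ) (i : ℕ) (S : Finset ℕ) :
    maskProd n (t ++ [i]) S = maskProd n t S * if t.length ∈ S then gen n i else 1 := by
  unfold maskProd
  rw [List.length_append, List.length_singleton, List.range_succ, List.filter_append,
    List.map_append, wordProd_append]
  congr 1
  · congr 1
    refine List.map_congr_left fun j hj => ?_
    exact List.getD_append _ _ _ _ (List.mem_range.1 (List.mem_of_mem_filter hj))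
  · by_cases hS : t.length ∈ S <;> simp [hS, wordProd]

lemma defectSet_insert_of_length_le (t : List ℕ) (S : Finset ℕ) {N : ℕ} (h : t.length ≤ N) :
    defectSet n t (insert N S) = defectSet n t S := by
  unfold defectSet
  refine Finset.filter_congr fun j hj => ?_
  rw [Finset.mem_range] at hj
  rw [maskProd_insert_of_length_le (t.take j) S (by rw [List.length_take]; omega)]

lemma card_defectSet_append_singleton (t : List ℕ) (i : ℕ) (S : Finset ℕ) :
    (defectSet n (t ++ [i]) S).card = (defectSet n t S).card +
      if len n (maskProd n t S * gen n i) < len n (maskProd n t S) then 1 else 0 := by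
  unfold defectSet
  rw [List.length_append, List.length_singleton, Finset.range_add_one, Finset.filter_insert,
    List.take_left, List.getD_append_right _ _ _ _ le_rfl, Nat.sub_self, List.getD_cons_zero]
  have hprefix : ∀ j ∈ Finset.range t.length,
      (len n (maskProd n ((t ++ [i]).take j) S * gen n ((t ++ [i]).getD j 0)) <
        len n (maskProd n ((t ++ [i]).take j) S)) ↔
      (len n (maskProd n (t.take j) S * gen n (t.getD j 0)) <
        len n (maskProd n (t.take j) S)) := fun j hj => by
    rw [Finset.mem_range] at hj
    rw [List.take_append_of_le_length hj.le, List.getD_append _ _ _ _ hj]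
  rw [Finset.filter_congr hprefix]
  split_ifs
  · exact Finset.card_insert_of_notMem fun hmem => by simpa using Finset.mem_of_mem_filter _ hmem
  · simp

lemma defPoly_append_singleton (t : List ℕ) (i : ℕ) (x : Equiv.Perm (Fin n)) :
    defPoly n (t ++ [i]) x =
      (if len n (x * gen n i) < len n x then X else 1) * defPoly n t x +
      (if len n x < len n (x * gen n i) then X else 1) * defPoly n t (x * gen n i) := by
  unfold defPoly
  rw [List.length_append, List.length_singleton, Finset.range_add_one,
    Finset.sum_powerset_insert Finset.notMem_range_self, Finset.mul_sum, Finset.mul_sum]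
  congr 1
  · refine Finset.sum_congr rfl fun S hS => ?_
    have hN : t.length ∉ S := fun h => by simpa using Finset.mem_powerset.1 hS h
    rw [maskProd_append_singleton, if_neg hN, mul_one, card_defectSet_append_singleton]
    by_cases hx : maskProd n t S = x
    · rw [if_pos hx, if_pos hx, hx, pow_add]
      split_ifs <;> ring
    · rw [if_neg hx, if_neg hx, mul_zero]
  · refine Finset.sum_congr rfl fun S _ => ?_
    rw [maskProd_append_singleton, if_pos (Finset.mem_insert_self _ _),
      card_defectSet_append_singleton, maskProd_insert_of_length_le t S le_rfl,
      defectSet_insert_of_length_le t S le_rfl]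
    by_cases hx : maskProd n t S = x * gen n i
    · rw [hx, mul_gen_mul_gen, if_pos rfl, if_pos rfl, pow_add]
      split_ifs <;> ring
    · rw [if_neg fun h => hx (by rw [← h, mul_gen_mul_gen]), if_neg hx, mul_zero]

lemma defPoly_append_singleton_of_lt (t : List ℕ) {x : Equiv.Perm (Fin n)} {i : ℕ} (h1 : 1 ≤ i)
    (h2 : i < n) (hx : x ⟨i - 1, by omega⟩ < x ⟨i, h2⟩) :
    defPoly n (t ++ [i]) x = defPoly n t x + X * defPoly n t (x * gen n i) := by
  have hlen := len_mul_gen_of_lt x i h1 h2 hx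
  rw [defPoly_append_singleton, if_neg (by omega), if_pos (by omega), one_mul]

lemma defPoly_append_singleton_of_gt (t : List ℕ) {x : Equiv.Perm (Fin n)} {i : ℕ} (h1 : 1 ≤ i)
    (h2 : i < n) (hx : x ⟨i, h2⟩ < x ⟨i - 1, by omega⟩) :
    defPoly n (t ++ [i]) x = X * defPoly n t x + defPoly n t (x * gen n i) := by
  have hlen := len_mul_gen_of_gt x i h1 h2 hx
  rw [defPoly_append_singleton, if_pos (by omega), if_neg (by omega), one_mul]

lemma defPoly_nil (x : Equiv.Perm (Fin n)) : defPoly n [] x = if x = 1 then 1 else 0 := by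
  simp [defPoly, maskProd, wordProd, defectSet, eq_comm]

lemma wordProd_apply_of_forall_lt (l : List ℕ) {p : ℕ} (hp : p < n) (hl : ∀ j ∈ l, j < p) :
    wordProd n l ⟨p, hp⟩ = ⟨p, hp⟩ := by
  induction l with
  | nil => rfl
  | cons a l ih =>
    rw [List.forall_mem_cons] at hl
    simp only [wordProd, List.map_cons, List.prod_cons, Equiv.Perm.mul_apply] at ih ⊢
    rw [ih hl.2, gen_apply_of_lt a p hp hl.1]

lemma defPoly_eq_zero_of_apply_ne (t : List ℕ) {x : Equiv.Perm (Fin n)} {p : ℕ} (hp : p < n)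
    (ht : ∀ j ∈ t, j < p) (hx : x ⟨p, hp⟩ ≠ ⟨p, hp⟩) : defPoly n t x = 0 := by
  refine Finset.sum_eq_zero fun S _ => if_neg ?_
  rintro rfl
  refine hx (wordProd_apply_of_forall_lt _ hp ?_)
  simp only [List.mem_map, List.mem_filter, List.mem_range]
  rintro _ ⟨j, ⟨hj, -⟩, rfl⟩
  exact ht _ (List.getD_eq_getElem t 0 hj ▸ List.getElem_mem hj)

lemma one_apply_pred_lt (i : ℕ) (h1 : 1 ≤ i) (h2 : i < n) :
    (1 : Equiv.Perm (Fin n)) ⟨i - 1, by omega⟩ < (1 : Equiv.Perm (Fin n)) ⟨i, h2⟩ := by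
  simp only [Equiv.Perm.one_apply, Fin.mk_lt_mk]
  omega

lemma gen_apply_lt_pred (i : ℕ) (h1 : 1 ≤ i) (h2 : i < n) :
    gen n i ⟨i, h2⟩ < gen n i ⟨i - 1, by omega⟩ := by
  rw [gen_apply_self i h1 h2, gen_apply_pred i h1 h2, Fin.mk_lt_mk]
  omega

lemma gen_apply_pred_lt_of_ne {i j : ℕ} (hi : 1 ≤ i) (hin : i < n) (hj : 1 ≤ j) (hjn : j < n)
    (hij : j ≠ i) : gen n i ⟨j - 1, by omega⟩ < gen n i ⟨j, hjn⟩ := by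
  rw [Fin.lt_def, gen_val i hi hin, gen_val i hi hin]
  grind

lemma defPoly_append_pair_one (t : List ℕ) {l : ℕ} (hl : 1 ≤ l) (hn : l + 1 < n)
    (ht : ∀ j ∈ t, j < l + 1) :
    defPoly n (t ++ [l + 1, l]) 1 = defPoly n t 1 + X * defPoly n t (gen n l) := by
  rw [show t ++ [l + 1, l] = t ++ [l + 1] ++ [l] by simp,
    defPoly_append_singleton_of_lt _ hl (by omega) (one_apply_pred_lt l hl (by omega)), one_mul,
    defPoly_append_singleton_of_lt _ (by omega) hn (one_apply_pred_lt (l + 1) (by omega) hn),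
    one_mul, defPoly_append_singleton_of_lt _ (by omega) hn
      (gen_apply_pred_lt_of_ne hl (by omega) (by omega) hn (by omega)),
    defPoly_eq_zero_of_apply_ne t hn ht (gen_apply_self_ne (l + 1) (by omega) hn),
    defPoly_eq_zero_of_apply_ne t hn ht (x := gen n l * gen n (l + 1))
      (by grind [gen_val, Fin.ext_iff, Equiv.Perm.mul_apply])]
  ring

lemma defPoly_append_pair_gen (t : List ℕ) {l : ℕ} (hl : 1 ≤ l) (hn : l + 1 < n)
    (ht : ∀ j ∈ t, j < l + 1) :
    defPoly n (t ++ [l + 1, l]) (gen n (l + 1)) = defPoly n t 1 := by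
  rw [show t ++ [l + 1, l] = t ++ [l + 1] ++ [l] by simp,
    defPoly_append_singleton_of_lt _ hl (by omega)
      (gen_apply_pred_lt_of_ne (by omega) hn hl (by omega) (by omega)),
    defPoly_append_singleton_of_gt _ (by omega) hn (gen_apply_lt_pred _ (by omega) hn),
    gen_mul_gen,
    defPoly_append_singleton_of_lt _ (by omega) hn
      (by grind [gen_val, Fin.lt_def, Equiv.Perm.mul_apply]),
    defPoly_eq_zero_of_apply_ne t hn ht (gen_apply_self_ne (l + 1) (by omega) hn),
    defPoly_eq_zero_of_apply_ne t hn ht (x := gen n (l + 1) * gen n l)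
      (by grind [gen_val, Fin.ext_iff, Equiv.Perm.mul_apply]),
    defPoly_eq_zero_of_apply_ne t hn ht (x := gen n (l + 1) * gen n l * gen n (l + 1))
      (by grind [gen_val, Fin.ext_iff, Equiv.Perm.mul_apply])]
  ring

lemma wklWord_self (k : ℕ) : wklWord (k + 1) (k + 1) = [k + 1, k] := by
  simp [wklWord]

lemma wklWord_succ {k l : ℕ} (h : k ≤ l) : wklWord k (l + 1) = wklWord k l ++ [l + 1, l] := by
  rw [wklWord, show l + 1 - k + 1 = l - k + 1 + 1 by omega, List.range_succ, List.flatMap_append]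
  simp [wklWord, show k + (l - k + 1) = l + 1 by omega]

lemma lt_of_mem_wklWord {k l j : ℕ} (hj : j ∈ wklWord k l) (h : k ≤ l) : j < l + 1 := by
  simp only [wklWord, List.mem_flatMap, List.mem_range, List.mem_cons, List.not_mem_nil,
    or_false] at hj
  omega

end

/-- the defect generating polynomial at the identity for the reduced word
`s_k s_{k-1} s_{k+1} s_k ⋯ s_l s_{l-1}` is the q-Fibonacci polynomial `F_{l-k+1}(q)`. -/
theorem stmt13 (n k l : ℕ) (h2 : 2 ≤ k) (hkl : k ≤ l) (hln : l < n) :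
    defPoly n (wklWord k l) 1 = qFib (l - k + 1) := by
  suffices ∀ m, k ≤ m → m < n → defPoly n (wklWord k m) 1 = qFib (m - k + 1) ∧
      defPoly n (wklWord k m) (gen n m) = qFib (m - k) from (this l hkl hln).1
  intro m hkm
  induction m, hkm using Nat.le_induction with
  | base =>
    intro hn
    obtain ⟨j, rfl⟩ : ∃ j, k = j + 1 := ⟨k - 1, by omega⟩
    rw [wklWord_self, ← List.nil_append [j + 1, j],
      defPoly_append_pair_one [] (by omega) hn (by simp),
      defPoly_append_pair_gen [] (by omega) hn (by simp),
      defPoly_eq_zero_of_apply_ne [] (by omega) (by simp)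
        (gen_apply_self_ne j (by omega) (by omega)),
      defPoly_nil, if_pos rfl]
    simp [qFib]
  | succ m hkm ih =>
    intro hn
    obtain ⟨hone, hgen⟩ := ih (by omega)
    have ht : ∀ j ∈ wklWord k m, j < m + 1 := fun j hj => lt_of_mem_wklWord hj hkm
    rw [wklWord_succ hkm, defPoly_append_pair_one _ (by omega) hn ht,
      defPoly_append_pair_gen _ (by omega) hn ht, hone, hgen,
      show m + 1 - k + 1 = m - k + 2 by omega, show m + 1 - k = m - k + 1 by omega]
    exact ⟨by rw [qFib], rfl⟩
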